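/- Let Δ ⊂ ℝ³ be the maximal polytope of class a), namely Δ = conv{a, b, d, p} with a = (2,1,−2), b = (2,0,1), d = (2,2,1), p = (−4,−2,1). Then F(Δ) = conv{(0,0,0), (1,1/3,0), (1,2/3,0), (1,1/2,−1/2)} and Δ is, up to translation, equal to 6·F(Δ). -/

import Mathlib

noncomputable section

def pairing {n : ℕ} (x : Fin n → ℝ) (ν : Fin n → ℤ) : ℝ := ∑ i, x i * (ν i : ℝ)

def IsLatticePoint {n : ℕ} (x : Fin n → ℝ) : Prop := ∀ i, ∃ z : ℤ, x i = (z : ℝ)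

/-- `ord_Δ(ν) := min_{m ∈ Δ ∩ M} ⟨m, ν⟩`. -/
def ordL {n : ℕ} (Δ : Set (Fin n → ℝ)) (ν : Fin n → ℤ) : ℝ :=
  sInf ((fun m => pairing m ν) '' {m ∈ Δ | IsLatticePoint m})

/-- The Fine interior `F(Δ)`. -/
def FineInterior {n : ℕ} (Δ : Set (Fin n → ℝ)) : Set (Fin n → ℝ) :=
  { x | ∀ ν : Fin n → ℤ, ν ≠ 0 → ordL Δ ν + 1 ≤ pairing x ν }

/-- The maximal polytope of class a):
`Δ = conv{(2,1,−2), (2,0,1), (2,2,1), (−4,−2,1)} ⊂ ℝ³`. -/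
def Δa : Set (Fin 3 → ℝ) :=
  convexHull ℝ {![2, 1, -2], ![2, 0, 1], ![2, 2, 1], ![-4, -2, 1]}

/-! The facets of `Δ` have inner normals `(-1,0,0)`, `(0,0,-1)`, `(-1,3,1)`, `(2,-3,1)`, on which
`ord_Δ` takes the values `-2, -1, -1, -1`; the Fine inequalities for these four `ν` cut out
exactly `T := conv{(0,0,0), (1,1/3,0), (1,2/3,0), (1,1/2,-1/2)}`. Conversely `Δ = 6 • T + p` with
`p = (-4,-2,1)`, so for `t ∈ T` and `ν ≠ 0` we get `6 ⟨t,ν⟩ + ⟨p,ν⟩ ≥ ord_Δ(ν)`. Since `ord_Δ(ν)`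
is bounded by the integer vertex values, an elementary integer inequality gives
`5 ord_Δ(ν) + ⟨p,ν⟩ ≤ -6`, which turns this into `⟨t,ν⟩ ≥ ord_Δ(ν) + 1`. -/

section Pairing

variable {n : ℕ}

lemma pairing_isLinearMap (ν : Fin n → ℤ) : IsLinearMap ℝ (pairing · ν) where
  map_add x y := by simp only [pairing, Pi.add_apply, add_mul, Finset.sum_add_distrib]
  map_smul c x := by simp only [pairing, Pi.smul_apply, smul_eq_mul, Finset.mul_sum, mul_assoc]

lemma le_pairing_of_mem_convexHull {s : Set (Fin n → ℝ)} {ν : Fin n → ℤ} {c : ℝ}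
    (h : ∀ v ∈ s, c ≤ pairing v ν) {x : Fin n → ℝ} (hx : x ∈ convexHull ℝ s) :
    c ≤ pairing x ν :=
  convexHull_min h (convex_halfSpace_ge (pairing_isLinearMap ν) c) hx

lemma ordL_convexHull_le {s : Set (Fin n → ℝ)} (hs : s.Finite) {v : Fin n → ℝ} (hv : v ∈ s)
    (hv' : IsLatticePoint v) (ν : Fin n → ℤ) : ordL (convexHull ℝ s) ν ≤ pairing v ν := by
  obtain ⟨c, hc⟩ := (hs.image (pairing · ν)).bddBelow
  refine csInf_le ⟨c, ?_⟩ ⟨v, ⟨subset_convexHull ℝ s hv, hv'⟩, rfl⟩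
  rintro _ ⟨x, ⟨hx, -⟩, rfl⟩
  exact le_pairing_of_mem_convexHull (fun w hw => hc ⟨w, hw, rfl⟩) hx

lemma ordL_le_pairing_of_mem_convexHull {s : Set (Fin n → ℝ)} (hs : s.Finite)
    (hlat : ∀ v ∈ s, IsLatticePoint v) {x : Fin n → ℝ} (hx : x ∈ convexHull ℝ s)
    (ν : Fin n → ℤ) : ordL (convexHull ℝ s) ν ≤ pairing x ν :=
  le_pairing_of_mem_convexHull (fun v hv => ordL_convexHull_le hs hv (hlat v hv) ν) hx

lemma le_ordL_convexHull {s : Set (Fin n → ℝ)} {v : Fin n → ℝ} (hv : v ∈ s)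
    (hv' : IsLatticePoint v) {ν : Fin n → ℤ} {c : ℝ} (h : ∀ w ∈ s, c ≤ pairing w ν) :
    c ≤ ordL (convexHull ℝ s) ν := by
  refine le_csInf ⟨_, v, ⟨subset_convexHull ℝ s hv, hv'⟩, rfl⟩ ?_
  rintro _ ⟨x, ⟨hx, -⟩, rfl⟩
  exact le_pairing_of_mem_convexHull h hx

lemma add_one_le_pairing_of_mem_fineInterior {s : Set (Fin n → ℝ)} {v : Fin n → ℝ} (hv : v ∈ s)
    (hv' : IsLatticePoint v) {x : Fin n → ℝ} (hx : x ∈ FineInterior (convexHull ℝ s))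
    {ν : Fin n → ℤ} (hν : ν ≠ 0) {c : ℝ} (h : ∀ w ∈ s, c ≤ pairing w ν) :
    c + 1 ≤ pairing x ν :=
  (add_le_add_left (le_ordL_convexHull hv hv' h) 1).trans (hx ν hν)

end Pairing

@[simp]
lemma pairing_fin_three (x : Fin 3 → ℝ) (ν : Fin 3 → ℤ) :
    pairing x ν = x 0 * ν 0 + x 1 * ν 1 + x 2 * ν 2 := by
  simp [pairing, Fin.sum_univ_three]

lemma isLatticePoint_intCast_vec (a b c : ℤ) : IsLatticePoint ![(a : ℝ), b, c] := by
  intro i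
  fin_cases i
  exacts [⟨a, rfl⟩, ⟨b, rfl⟩, ⟨c, rfl⟩]

def ΔaVerts : Set (Fin 3 → ℝ) := {![2, 1, -2], ![2, 0, 1], ![2, 2, 1], ![-4, -2, 1]}

def FaVerts : Set (Fin 3 → ℝ) := {![0, 0, 0], ![1, 1/3, 0], ![1, 2/3, 0], ![1, 1/2, -1/2]}

lemma Δa_eq_convexHull : Δa = convexHull ℝ ΔaVerts := rfl

lemma ΔaVerts_finite : ΔaVerts.Finite := by simp [ΔaVerts]

lemma isLatticePoint_of_mem_ΔaVerts {v : Fin 3 → ℝ} (hv : v ∈ ΔaVerts) : IsLatticePoint v := by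
  rcases hv with rfl | rfl | rfl | rfl
  · simpa using isLatticePoint_intCast_vec 2 1 (-2)
  · simpa using isLatticePoint_intCast_vec 2 0 1
  · simpa using isLatticePoint_intCast_vec 2 2 1
  · simpa using isLatticePoint_intCast_vec (-4) (-2) 1

lemma Δa_eq_image_smul_add :
    Δa = (fun x => (6 : ℝ) • x + ![-4, -2, 1]) '' convexHull ℝ FaVerts := by
  let φ : (Fin 3 → ℝ) →ᵃ[ℝ] (Fin 3 → ℝ) :=
    ((6 : ℝ) • LinearMap.id).toAffineMap + AffineMap.const ℝ _ ![-4, -2, 1]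
  have hφ : ⇑φ = fun x => (6 : ℝ) • x + ![-4, -2, 1] := rfl
  rw [← hφ, φ.image_convexHull, Δa_eq_convexHull]
  congr 1
  simp only [FaVerts, ΔaVerts, Set.image_insert_eq, Set.image_singleton, hφ]
  ext y
  norm_num [Matrix.smul_cons, Matrix.cons_add_cons]
  tauto

lemma mem_convexHull_FaVerts {x : Fin 3 → ℝ} (h₁ : x 0 ≤ 1) (h₂ : x 2 ≤ 0)
    (h₃ : 0 ≤ -x 0 + 3 * x 1 + x 2) (h₄ : 0 ≤ 2 * x 0 - 3 * x 1 + x 2) :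
    x ∈ convexHull ℝ FaVerts := by
  let w : Fin 4 → ℝ := ![1 - x 0, 2 * x 0 - 3 * x 1 + x 2, -x 0 + 3 * x 1 + x 2, -2 * x 2]
  let p : Fin 4 → Fin 3 → ℝ := ![![0, 0, 0], ![1, 1/3, 0], ![1, 2/3, 0], ![1, 1/2, -1/2]]
  have hx : x = ∑ i, w i • p i := by
    ext k
    fin_cases k <;> simp [w, p, Fin.sum_univ_four] <;> ring
  rw [hx]
  refine (convex_convexHull ℝ _).sum_mem (fun i _ => ?_) ?_ (fun i _ => ?_)
  · fin_cases i <;> simp [w] <;> linarith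
  · simp [w, Fin.sum_univ_four]
    ring
  · fin_cases i <;> exact subset_convexHull ℝ _ (by simp [p, FaVerts])

lemma five_mul_add_pairing_le_of_forall_mem_ΔaVerts {ν : Fin 3 → ℤ} (hν : ν ≠ 0) {o : ℝ}
    (h : ∀ v ∈ ΔaVerts, o ≤ pairing v ν) : 5 * o + pairing ![-4, -2, 1] ν ≤ -6 := by
  simp only [ΔaVerts, Set.forall_mem_insert, Set.mem_singleton_iff, forall_eq] at h
  obtain ⟨ha, hb, hd, hp⟩ := h
  have hν_coord : ν 0 ≠ 0 ∨ ν 1 ≠ 0 ∨ ν 2 ≠ 0 := by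
    contrapose! hν
    ext i
    fin_cases i <;> simp [hν]
  have hint : 5 * min (min (2 * ν 0 + ν 1 - 2 * ν 2) (2 * ν 0 + ν 2))
      (min (2 * ν 0 + 2 * ν 1 + ν 2) (-4 * ν 0 - 2 * ν 1 + ν 2)) +
      (-4 * ν 0 - 2 * ν 1 + ν 2) ≤ -6 := by
    omega
  have hmin : o ≤ (min (min (2 * ν 0 + ν 1 - 2 * ν 2) (2 * ν 0 + ν 2))
      (min (2 * ν 0 + 2 * ν 1 + ν 2) (-4 * ν 0 - 2 * ν 1 + ν 2)) : ℤ) := by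
    push_cast
    simp at ha hb hd hp
    exact le_min (le_min (by linarith) (by linarith)) (le_min (by linarith) (by linarith))
  have hreal := (Int.cast_le (R := ℝ)).2 hint
  push_cast at hreal hmin
  simp
  linarith

lemma fineInterior_Δa_subset : FineInterior Δa ⊆ convexHull ℝ FaVerts := by
  intro x hx
  have facet (ν : Fin 3 → ℤ) (hν : ν ≠ 0) (c : ℝ) (h : ∀ w ∈ ΔaVerts, c ≤ pairing w ν) :
      c + 1 ≤ pairing x ν :=
    add_one_le_pairing_of_mem_fineInterior (Set.mem_insert _ _)
      (isLatticePoint_of_mem_ΔaVerts (Set.mem_insert _ _)) hx hν h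
  have h₁ := facet ![-1, 0, 0] (by simp) (-2) (by simp [ΔaVerts]; norm_num)
  have h₂ := facet ![0, 0, -1] (by simp) (-1) (by simp [ΔaVerts]; norm_num)
  have h₃ := facet ![-1, 3, 1] (by simp) (-1) (by simp [ΔaVerts]; norm_num)
  have h₄ := facet ![2, -3, 1] (by simp) (-1) (by simp [ΔaVerts]; norm_num)
  simp at h₁ h₂ h₃ h₄
  exact mem_convexHull_FaVerts (by linarith) (by linarith) (by linarith) (by linarith)

lemma convexHull_FaVerts_subset_fineInterior : convexHull ℝ FaVerts ⊆ FineInterior Δa := by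
  intro t ht ν hν
  have hdil : (6 : ℝ) • t + ![-4, -2, 1] ∈ Δa := Δa_eq_image_smul_add ▸ ⟨t, ht, rfl⟩
  have hord : ordL Δa ν ≤ 6 * pairing t ν + pairing ![-4, -2, 1] ν := by
    have := ordL_le_pairing_of_mem_convexHull ΔaVerts_finite
      (fun _ => isLatticePoint_of_mem_ΔaVerts) hdil ν
    rwa [(pairing_isLinearMap ν).map_add, (pairing_isLinearMap ν).map_smul] at this
  have hvert (v) (hv : v ∈ ΔaVerts) : ordL Δa ν ≤ pairing v ν :=
    ordL_convexHull_le ΔaVerts_finite hv (isLatticePoint_of_mem_ΔaVerts hv) ν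
  linarith [five_mul_add_pairing_le_of_forall_mem_ΔaVerts hν hvert]

lemma fineInterior_Δa : FineInterior Δa = convexHull ℝ FaVerts :=
  fineInterior_Δa_subset.antisymm convexHull_FaVerts_subset_fineInterior

/-- For the maximal polytope of class a),
`F(Δ) = conv{(0,0,0), (1,1/3,0), (1,2/3,0), (1,1/2,−1/2)}` and `Δ` is, up to
translation, equal to the dilation `6·F(Δ)`. -/
theorem fineInterior_classA_max_and_dilation :
    FineInterior Δa =
      convexHull ℝ {![0, 0, 0], ![1, 1/3, 0], ![1, 2/3, 0], ![1, 1/2, -1/2]} ∧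
    ∃ c : Fin 3 → ℝ, Δa = (fun x => (6 : ℝ) • x + c) '' FineInterior Δa :=
  ⟨fineInterior_Δa, ![-4, -2, 1], fineInterior_Δa ▸ Δa_eq_image_smul_add⟩
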